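/- arXiv:2407.04357 — 3 statements merged into one kernel-verified Lean document; each statement's English description precedes it below -/
import Mathlib

section
/- Let X be a Banach space and V : [0,∞) → B(X) with V(0) = I, each V(t) a contraction, and V(t)V(t') = V(t')V(t) for all t, t' ≥ 0. Suppose Ax := lim_{h→0⁺} (V(h)x − x)/h exists for all x in a dense subspace D(A) ⊂ X. Let (a_{n,i})_{i=1}^n, n ∈ ℕ, be a triangular array of positive reals with Σ_{i=1}^n a_{n,i} = 1 for each n and lim_{n→∞} Σ_{i=1}^n |1/n − a_{n,i}| = 0. Then for every x ∈ X, lim_{n→∞} ‖V(t/n)^n x − ∏_{i=1}^n V(a_{n,i} t) x‖ = 0, uniformly for t ∈ [0, t₀] for any fixed t₀ > 0. -/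
/-!
On the dense subspace where `V` is differentiable at `0`, `V s y = y + s • A y + o(s)`, hence
`‖V (t/n) y - V (a n i * t) y‖ ≤ |t/n - a n i * t| ‖A y‖ + o(t/n + a n i * t)`; the `o` is uniform
in `i` and `t ≤ t₀` because every `a n i ≤ 1/n + ∑ⱼ |1/n - a n j| → 0`. For commuting
contractions, `‖S ^ n x - T₁ ⋯ Tₙ x‖ ≤ ∑ ‖S x - Tᵢ x‖`, and since `∑ (t/n + a n i * t) = 2t`
the summed estimate is `t ∑ |1/n - a n i| ‖A y‖ + o(1)`. Finally the operators
`V (t/n) ^ n - ∏ V (a n i * t)` all have norm at most `2`, so the convergence passes from the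
dense subspace to all of `X`.
-/

open Filter Topology Set

section Operators

variable {𝕜 X : Type*} [NontriviallyNormedField 𝕜] [NormedAddCommGroup X] [NormedSpace 𝕜 X]

theorem ContinuousLinearMap.norm_list_prod_le_one {L : List (X →L[𝕜] X)}
    (hL : ∀ T ∈ L, ‖T‖ ≤ 1) : ‖L.prod‖ ≤ 1 := by
  induction L with
  | nil => exact ContinuousLinearMap.norm_id_le
  | cons T L ih =>
    rw [List.prod_cons]
    calc ‖T * L.prod‖ ≤ ‖T‖ * ‖L.prod‖ := norm_mul_le _ _
      _ ≤ 1 * 1 := by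
        gcongr
        exacts [hL T List.mem_cons_self, ih fun S hS => hL S (List.mem_cons_of_mem _ hS)]
      _ = 1 := one_mul 1

theorem ContinuousLinearMap.norm_pow_le_one {S : X →L[𝕜] X} (hS : ‖S‖ ≤ 1) (n : ℕ) :
    ‖S ^ n‖ ≤ 1 := by
  rw [← List.prod_replicate]
  exact norm_list_prod_le_one fun T hT => List.eq_of_mem_replicate hT ▸ hS

theorem ContinuousLinearMap.norm_pow_apply_sub_prod_ofFn_apply_le {S : X →L[𝕜] X} (hS : ‖S‖ ≤ 1)
    {n : ℕ} {T : Fin n → X →L[𝕜] X} (hT : ∀ i, ‖T i‖ ≤ 1 ∧ Commute S (T i)) (x : X) :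
    ‖(S ^ n) x - (List.ofFn T).prod x‖ ≤ ∑ i, ‖S x - T i x‖ := by
  induction n with
  | zero => simp
  | succ n ih =>
    obtain ⟨hT₀, hST₀⟩ := hT 0
    set P := (List.ofFn fun i => T i.succ).prod
    have hsplit : S ^ (n + 1) - T 0 * P = S ^ n * (S - T 0) + T 0 * (S ^ n - P) := by
      rw [pow_succ, mul_sub, mul_sub, (hST₀.pow_left n).eq]
      abel
    have hsplit_x := congrArg (fun F => F x) hsplit
    simp only [sub_apply, add_apply, mul_apply_eq_comp] at hsplit_x
    rw [List.ofFn_succ, List.prod_cons, mul_apply_eq_comp, hsplit_x, Fin.sum_univ_succ]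
    calc ‖(S ^ n) (S x - T 0 x) + T 0 ((S ^ n) x - P x)‖
        ≤ ‖S ^ n‖ * ‖S x - T 0 x‖ + ‖T 0‖ * ‖(S ^ n) x - P x‖ :=
          (norm_add_le _ _).trans (add_le_add (le_opNorm _ _) (le_opNorm _ _))
      _ ≤ 1 * ‖S x - T 0 x‖ + 1 * ∑ i : Fin n, ‖S x - T i.succ x‖ := by
          gcongr
          exacts [norm_pow_le_one hS n, ih fun i => hT i.succ]
      _ = _ := by rw [one_mul, one_mul]

theorem ContinuousLinearMap.norm_pow_sub_prod_ofFn_le_two {S : X →L[𝕜] X} (hS : ‖S‖ ≤ 1)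
    {n : ℕ} {T : Fin n → X →L[𝕜] X} (hT : ∀ i, ‖T i‖ ≤ 1) : ‖S ^ n - (List.ofFn T).prod‖ ≤ 2 := by
  have hprod : ‖(List.ofFn T).prod‖ ≤ 1 := norm_list_prod_le_one fun U hU => by
    obtain ⟨i, rfl⟩ := List.mem_ofFn.1 hU
    exact hT i
  linarith [norm_sub_le (S ^ n) (List.ofFn T).prod, norm_pow_le_one hS n]

theorem ContinuousLinearMap.tendstoUniformlyOn_apply_of_dense {Y ι α : Type*}
    [NormedAddCommGroup Y] [NormedSpace 𝕜 Y] {l : Filter ι} {s : Set α}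
    {F : ι → α → X →L[𝕜] Y} {C : ℝ} (hF : ∀ i, ∀ t ∈ s, ‖F i t‖ ≤ C) {D : Set X} (hD : Dense D)
    (h : ∀ y ∈ D, TendstoUniformlyOn (fun i t => F i t y) (fun _ => 0) l s) (x : X) :
    TendstoUniformlyOn (fun i t => F i t x) (fun _ => 0) l s := by
  rw [Metric.tendstoUniformlyOn_iff]
  intro ε hε
  obtain ⟨r, hr, hCr⟩ := exists_pos_mul_lt (half_pos hε) C
  obtain ⟨y, hyD, hxy⟩ := hD.exists_dist_lt x hr
  filter_upwards [Metric.tendstoUniformlyOn_iff.1 (h y hyD) _ (half_pos hε)] with i hi t ht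
  have hclose : ‖F i t (x - y)‖ ≤ C * r := calc
    ‖F i t (x - y)‖ ≤ ‖F i t‖ * ‖x - y‖ := le_opNorm _ _
    _ ≤ ‖F i t‖ * r := by gcongr; exact (dist_eq_norm x y ▸ hxy).le
    _ ≤ C * r := by gcongr; exact hF i t ht
  have hy := hi t ht
  rw [dist_zero_left] at hy ⊢
  calc ‖F i t x‖ = ‖F i t (x - y) + F i t y‖ := by rw [map_sub, sub_add_cancel]
    _ ≤ ‖F i t (x - y)‖ + ‖F i t y‖ := norm_add_le _ _
    _ < ε / 2 + ε / 2 := by linarith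
    _ = ε := add_halves ε

end Operators

theorem TendstoUniformlyOn.of_norm_le {ι α E : Type*} [SeminormedAddCommGroup E] {l : Filter ι}
    {s : Set α} {F : ι → α → E} {G : ι → α → ℝ}
    (hG : TendstoUniformlyOn G (fun _ => 0) l s) (hFG : ∀ᶠ i in l, ∀ t ∈ s, ‖F i t‖ ≤ G i t) :
    TendstoUniformlyOn F (fun _ => 0) l s := by
  rw [Metric.tendstoUniformlyOn_iff] at hG ⊢
  intro ε hε
  filter_upwards [hG ε hε, hFG] with i hi hFGi t ht
  have := hi t ht
  rw [dist_zero_left] at this ⊢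
  exact (hFGi t ht).trans_lt ((le_abs_self _).trans_lt this)

theorem Fin.sum_univ_add_one_eq_sum_Icc {M : Type*} [AddCommMonoid M] (f : ℕ → M) (n : ℕ) :
    ∑ i : Fin n, f (i + 1) = ∑ i ∈ Finset.Icc 1 n, f i := by
  rw [Fin.sum_univ_eq_sum_range (fun i => f (i + 1)), Finset.range_eq_Ico, Finset.sum_Ico_add']
  rfl

theorem le_add_sum_abs_sub {ι : Type*} {I : Finset ι} {b : ι → ℝ} {i : ι} (hi : i ∈ I) (q : ℝ) :
    b i ≤ q + ∑ j ∈ I, |q - b j| := by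
  have := Finset.single_le_sum (f := fun j => |q - b j|) (fun j _ => abs_nonneg _) hi
  linarith [neg_abs_le (q - b i)]

section Real

variable {X : Type*} [NormedAddCommGroup X] [NormedSpace ℝ X]

theorem norm_sub_le_of_norm_sub_smul_le {u w v : X} {s r c : ℝ} (hu : ‖u - s • v‖ ≤ c * s)
    (hw : ‖w - r • v‖ ≤ c * r) : ‖u - w‖ ≤ c * s + c * r + |s - r| * ‖v‖ := calc
  ‖u - w‖ = ‖(u - s • v) - (w - r • v) + (s - r) • v‖ := by rw [sub_smul]; abel_nf
  _ ≤ ‖u - s • v‖ + ‖w - r • v‖ + ‖(s - r) • v‖ :=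
    (norm_add_le _ _).trans (add_le_add_left (norm_sub_le _ _) _)
  _ ≤ c * s + c * r + |s - r| * ‖v‖ := by rw [norm_smul, Real.norm_eq_abs]; gcongr

theorem sum_norm_sub_le_of_norm_sub_smul_le {g : ℝ → X} {v : X} {c u t : ℝ}
    (hg : ∀ s ∈ Ico 0 u, ‖g s - g 0 - s • v‖ ≤ c * s) {n : ℕ} (hn : 1 ≤ n) {b : ℕ → ℝ}
    (hb : ∀ i ∈ Finset.Icc 1 n, 0 ≤ b i) (hbsum : ∑ i ∈ Finset.Icc 1 n, b i = 1) (ht : 0 ≤ t)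
    (hu : (1 / n + ∑ i ∈ Finset.Icc 1 n, |1 / (n : ℝ) - b i|) * t < u) :
    ∑ i ∈ Finset.Icc 1 n, ‖g (t / n) - g (b i * t)‖
      ≤ 2 * c * t + (∑ i ∈ Finset.Icc 1 n, |1 / (n : ℝ) - b i|) * t * ‖v‖ := by
  have hmem {r : ℝ} (hr : 0 ≤ r) (hru : r ≤ 1 / n + ∑ i ∈ Finset.Icc 1 n, |1 / (n : ℝ) - b i|) :
      r * t ∈ Ico 0 u :=
    ⟨mul_nonneg hr ht, (mul_le_mul_of_nonneg_right hru ht).trans_lt hu⟩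
  have hstep : t / n ∈ Ico 0 u := by
    rw [show t / n = 1 / n * t by ring]
    exact hmem (by positivity) (le_add_of_nonneg_right (Finset.sum_nonneg fun i _ => abs_nonneg _))
  have hterm : ∀ i ∈ Finset.Icc 1 n, ‖g (t / n) - g (b i * t)‖
      ≤ c * t * (1 / n) + c * t * b i + |1 / (n : ℝ) - b i| * t * ‖v‖ := by
    intro i hi
    have := norm_sub_le_of_norm_sub_smul_le (hg _ hstep)
      (hg _ (hmem (hb i hi) (le_add_sum_abs_sub hi _)))
    rw [sub_sub_sub_cancel_right, show t / n - b i * t = (1 / n - b i) * t by ring, abs_mul,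
      abs_of_nonneg ht] at this
    exact this.trans_eq (by ring)
  have hstep_sum : ∑ _i ∈ Finset.Icc 1 n, c * t * (1 / n) = c * t := by
    rw [Finset.sum_const, Nat.card_Icc, Nat.add_sub_cancel, nsmul_eq_mul]
    field_simp
  have hb_sum : ∑ i ∈ Finset.Icc 1 n, c * t * b i = c * t := by
    rw [← Finset.mul_sum, hbsum, mul_one]
  calc _ ≤ ∑ i ∈ Finset.Icc 1 n, (c * t * (1 / n) + c * t * b i + |1 / (n : ℝ) - b i| * t * ‖v‖) :=
        Finset.sum_le_sum hterm
    _ = _ := by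
      rw [Finset.sum_add_distrib, Finset.sum_add_distrib, hstep_sum, hb_sum, ← Finset.sum_mul,
        ← Finset.sum_mul]
      ring

theorem tendstoUniformlyOn_sum_norm_sub {g : ℝ → X} {v : X} (hg : HasDerivWithinAt g v (Ici 0) 0)
    {a : ℕ → ℕ → ℝ} (hpos : ∀ n ≥ 1, ∀ i ∈ Finset.Icc 1 n, 0 < a n i)
    (hsum : ∀ n ≥ 1, ∑ i ∈ Finset.Icc 1 n, a n i = 1)
    (hdev : Tendsto (fun n : ℕ => ∑ i ∈ Finset.Icc 1 n, |1 / (n : ℝ) - a n i|) atTop (𝓝 0))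
    {t₀ : ℝ} (ht₀ : 0 < t₀) :
    TendstoUniformlyOn (fun (n : ℕ) (t : ℝ) => ∑ i ∈ Finset.Icc 1 n, ‖g (t / n) - g (a n i * t)‖)
      (fun _ => 0) atTop (Icc 0 t₀) := by
  rw [Metric.tendstoUniformlyOn_iff]
  intro ε hε
  set c := ε / (4 * t₀)
  obtain ⟨u, hu, hIco⟩ :=
    mem_nhdsGE_iff_exists_Ico_subset.1 (hg.isLittleO.def (by positivity : 0 < c))
  have hg' : ∀ s ∈ Ico 0 u, ‖g s - g 0 - s • v‖ ≤ c * s := fun s hs => by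
    simpa [abs_of_nonneg hs.1] using hIco hs
  have hmesh : Tendsto
      (fun n : ℕ => (1 / (n : ℝ) + ∑ i ∈ Finset.Icc 1 n, |1 / (n : ℝ) - a n i|) * t₀)
      atTop (𝓝 0) := by
    simpa using (tendsto_one_div_atTop_nhds_zero_nat.add hdev).mul_const t₀
  have hdev' : Tendsto (fun n : ℕ => (∑ i ∈ Finset.Icc 1 n, |1 / (n : ℝ) - a n i|) * t₀ * ‖v‖)
      atTop (𝓝 0) := by
    simpa using (hdev.mul_const t₀).mul_const ‖v‖
  filter_upwards [eventually_ge_atTop 1, hmesh.eventually_lt_const hu,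
    hdev'.eventually_lt_const (half_pos hε)] with n hn hnu hnε t ⟨ht0, htt₀⟩
  rw [dist_zero_left, Real.norm_of_nonneg (Finset.sum_nonneg fun i _ => norm_nonneg _)]
  calc _ ≤ 2 * c * t + (∑ i ∈ Finset.Icc 1 n, |1 / (n : ℝ) - a n i|) * t * ‖v‖ :=
        sum_norm_sub_le_of_norm_sub_smul_le hg' hn (fun i hi => (hpos n hn i hi).le) (hsum n hn)
          ht0 ((mul_le_mul_of_nonneg_left htt₀ (by positivity)).trans_lt hnu)
    _ ≤ 2 * c * t₀ + (∑ i ∈ Finset.Icc 1 n, |1 / (n : ℝ) - a n i|) * t₀ * ‖v‖ := by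
        gcongr
    _ < ε / 2 + ε / 2 := by
        have : 2 * c * t₀ = ε / 2 := by simp only [c]; field_simp; ring
        linarith
    _ = ε := add_halves ε

end Real

theorem pow_sub_prod_tendsto_zero_general
    {X : Type*} [NormedAddCommGroup X] [NormedSpace ℝ X]
    (V : ℝ → X →L[ℝ] X) (hV0 : V 0 = 1)
    (hcontr : ∀ t ≥ (0 : ℝ), ‖V t‖ ≤ 1)
    (hcomm : ∀ t ≥ (0 : ℝ), ∀ t' ≥ (0 : ℝ), V t * V t' = V t' * V t)
    (D : Submodule ℝ X) (hD : Dense (D : Set X))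
    (A : X → X)
    (hA : ∀ x ∈ D, Tendsto (fun h : ℝ => h⁻¹ • (V h x - x)) (𝓝[>] 0) (𝓝 (A x)))
    (a : ℕ → ℕ → ℝ)
    (hpos : ∀ n ≥ 1, ∀ i ∈ Finset.Icc 1 n, 0 < a n i)
    (hsum : ∀ n ≥ 1, ∑ i ∈ Finset.Icc 1 n, a n i = 1)
    (hdev : Tendsto (fun n : ℕ => ∑ i ∈ Finset.Icc 1 n, |1 / (n : ℝ) - a n i|)
      atTop (𝓝 0))
    (x : X) (t₀ : ℝ) (ht₀ : 0 < t₀) :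
    TendstoUniformlyOn
      (fun (n : ℕ) (t : ℝ) =>
        ((V (t / n)) ^ n) x - (List.ofFn fun i : Fin n => V (a n (i.1 + 1) * t)).prod x)
      (fun _ => 0) atTop (Icc 0 t₀) := by
  have hV : ∀ n : ℕ, ∀ t ∈ Icc 0 t₀, ‖V (t / n)‖ ≤ 1 ∧ ∀ i : Fin n,
      ‖V (a n (i.1 + 1) * t)‖ ≤ 1 ∧ Commute (V (t / n)) (V (a n (i.1 + 1) * t)) := by
    intro n t ht
    have hstep : 0 ≤ t / n := div_nonneg ht.1 n.cast_nonneg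
    refine ⟨hcontr _ hstep, fun i => ?_⟩
    have hi : 0 ≤ a n (i.1 + 1) * t :=
      mul_nonneg (hpos n i.pos _ (Finset.mem_Icc.2 ⟨by omega, i.2⟩)).le ht.1
    exact ⟨hcontr _ hi, hcomm _ hstep _ hi⟩
  refine ContinuousLinearMap.tendstoUniformlyOn_apply_of_dense
    (fun n t ht => ContinuousLinearMap.norm_pow_sub_prod_ofFn_le_two (hV n t ht).1
      fun i => ((hV n t ht).2 i).1) hD (fun y hy => ?_) x
  have hderiv : HasDerivWithinAt (fun s => V s y) (A y) (Ici 0) 0 := by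
    refine HasDerivWithinAt.Ici_of_Ioi ((hasDerivWithinAt_iff_tendsto_slope' self_notMem_Ioi).2 ?_)
    simpa [slope_fun_def, hV0] using hA y hy
  refine (tendstoUniformlyOn_sum_norm_sub hderiv hpos hsum hdev ht₀).of_norm_le
    (Eventually.of_forall fun n t ht => ?_)
  rw [← Fin.sum_univ_add_one_eq_sum_Icc (fun i => ‖V (t / n) y - V (a n i * t) y‖)]
  exact ContinuousLinearMap.norm_pow_apply_sub_prod_ofFn_apply_le (hV n t ht).1 (hV n t ht).2 y

/-- Lemma 2.  Let `V : [0,∞) → B(X)` with `V 0 = I`, each `V t` a contraction, and all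
`V t` commuting.  Assume `A x = lim_{h→0⁺} (V h x - x)/h` exists for all `x` in a dense
subspace `D`.  If `(a n i)_{i=1}^n` is a triangular array of positive reals with row
sums `1` and `lim_n ∑_{i=1}^n |1/n - a n i| = 0`, then for every `x ∈ X`,
`lim_n ‖(V (t/n))^n x - ∏_{i=1}^n V (a n i * t) x‖ = 0`, uniformly for `t ∈ [0, t₀]`. -/
theorem pow_sub_prod_tendsto_zero
    {X : Type*} [NormedAddCommGroup X] [NormedSpace ℝ X] [CompleteSpace X]
    (V : ℝ → X →L[ℝ] X) (hV0 : V 0 = 1)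
    (hcontr : ∀ t ≥ (0 : ℝ), ‖V t‖ ≤ 1)
    (hcomm : ∀ t ≥ (0 : ℝ), ∀ t' ≥ (0 : ℝ), V t * V t' = V t' * V t)
    (D : Submodule ℝ X) (hD : Dense (D : Set X))
    (A : X → X)
    (hA : ∀ x ∈ D, Tendsto (fun h : ℝ => h⁻¹ • (V h x - x)) (𝓝[>] 0) (𝓝 (A x)))
    (a : ℕ → ℕ → ℝ)
    (hpos : ∀ n ≥ 1, ∀ i ∈ Finset.Icc 1 n, 0 < a n i)
    (hsum : ∀ n ≥ 1, ∑ i ∈ Finset.Icc 1 n, a n i = 1)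
    (hdev : Tendsto (fun n : ℕ => ∑ i ∈ Finset.Icc 1 n, |1 / (n : ℝ) - a n i|)
      atTop (𝓝 0))
    (x : X) (t₀ : ℝ) (ht₀ : 0 < t₀) :
    TendstoUniformlyOn
      (fun (n : ℕ) (t : ℝ) =>
        ((V (t / n)) ^ n) x - (List.ofFn fun i : Fin n => V (a n (i.1 + 1) * t)).prod x)
      (fun _ => 0) atTop (Icc 0 t₀) :=
  pow_sub_prod_tendsto_zero_general V hV0 hcontr hcomm D hD A hA a hpos hsum hdev x t₀ ht₀
end

section
/- Let (T₁(t))_{t≥0} and (T₂(t))_{t≥0} be strongly continuous contraction semigroups on a Banach space X with generators (A₁, D(A₁)) and (A₂, D(A₂)). Assume T₁(t)T₂(t') = T₂(t')T₁(t) for all t, t' ≥ 0, that A₁ + A₂ with domain D(A₁) ∩ D(A₂) is closed and generates a strongly continuous semigroup (T₃(t))_{t≥0}, and that for some λ₀ > 0 the subspace (λ₀ − A₁ − A₂)(D(A₁) ∩ D(A₂)) is dense in X. Let (a_{n,i})_{i=1}^n, n ∈ ℕ, be a triangular array of positive reals with Σ_{i=1}^n a_{n,i} = 1 for each n and lim_{n→∞}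 Σ_{i=1}^n |1/n − a_{n,i}| = 0. Then for every x ∈ X, T₃(t)x = lim_{n→∞} ∏_{i=1}^n T₁(a_{n,i} t) T₂(a_{n,i} t) x, uniformly for t ∈ [0, t₀] for any fixed t₀ > 0. -/
/-!
Since `T₁` and `T₂` commute, `S t = T₁ t * T₂ t` is again a strongly continuous semigroup, and
the semigroup law collapses every product `∏ᵢ T₁ (aₙᵢ t) T₂ (aₙᵢ t)` with row sum `1` to `S t`.
So the formula amounts to `T₃ = S`. The generator of `S` extends `A₁ + A₂` on `D = D₁ ∩ D₂`, and
`D` is `S`-invariant because a bounded operator commuting with a semigroup preserves its domain.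
For `x ∈ D` the map `τ ↦ T₃ (t - τ) (S τ x)` has right derivative `0` on `[0, t)`, so
`T₃ t = S t` on `D`; and `D` is dense, since a functional vanishing on `D` also vanishes on
`A D`, hence on the dense set `(λ₀ - A₁ - A₂) D`.
-/
open Filter Topology Set

section BoundedOperatorFamilies

variable {α 𝕜 E F : Type*} [NontriviallyNormedField 𝕜] [NormedAddCommGroup E]
  [NormedSpace 𝕜 E] [NormedAddCommGroup F] [NormedSpace 𝕜 F]

theorem tendsto_clm_apply_of_eventually_norm_le {l : Filter α} {T : α → E →L[𝕜] F}
    {v : α → E} {y : E} {z : F} {M : ℝ} (hM : ∀ᶠ a in l, ‖T a‖ ≤ M)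
    (hT : Tendsto (fun a => T a y) l (𝓝 z)) (hv : Tendsto v l (𝓝 y)) :
    Tendsto (fun a => T a (v a)) l (𝓝 z) := by
  have hsmall : Tendsto (fun a => T a (v a - y)) l (𝓝 0) := by
    refine squeeze_zero_norm' ?_ (by simpa using ((hv.sub_const y).norm.const_mul M))
    filter_upwards [hM] with a ha using (T a).le_of_opNorm_le ha _
  simpa using hsmall.add hT

theorem exists_norm_le_of_continuousOn_apply [TopologicalSpace α] [CompleteSpace E]
    {K : Set α} (hK : IsCompact K) {T : α → E →L[𝕜] F} (hT : ∀ x, ContinuousOn (fun a => T a x) K) :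
    ∃ M, ∀ a ∈ K, ‖T a‖ ≤ M := by
  obtain ⟨M, hM⟩ := banach_steinhaus (g := fun a : K => T a) fun x => by
    obtain ⟨C, hC⟩ := hK.exists_bound_of_continuousOn (hT x)
    exact ⟨C, fun a => hC a a.2⟩
  exact ⟨M, fun a ha => hM ⟨a, ha⟩⟩

end BoundedOperatorFamilies

theorem Submodule.dense_of_forall_dual_eq_zero {X : Type*} [NormedAddCommGroup X]
    [NormedSpace ℝ X] (D : Submodule ℝ X)
    (h : ∀ f : StrongDual ℝ X, (∀ x ∈ D, f x = 0) → f = 0) : Dense (D : Set X) := by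
  by_contra hD
  obtain ⟨x, hx⟩ := not_forall.1 hD
  obtain ⟨f, u, hfu, hux⟩ :=
    geometric_hahn_banach_closed_point D.convex.closure isClosed_closure hx
  have hu : 0 < u := by simpa using hfu 0 (subset_closure D.zero_mem)
  -- `f` is bounded above on the subspace `D`, hence vanishes on it
  have hfD : ∀ y ∈ D, f y = 0 := by
    intro y hy
    by_contra hfy
    have := hfu _ (subset_closure (D.smul_mem ((u + 1) / f y) hy))
    rw [map_smul, smul_eq_mul, div_mul_cancel₀ _ hfy] at this
    linarith
  simp [h f hfD] at hux
  linarith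

section Semigroups

variable {X : Type*} [NormedAddCommGroup X] [NormedSpace ℝ X]

structure IsStronglyContinuousSemigroup (T : ℝ → X →L[ℝ] X) : Prop where
  map_zero : T 0 = 1
  map_add : ∀ s ≥ (0 : ℝ), ∀ t ≥ (0 : ℝ), T (s + t) = T s * T t
  continuousOn_apply : ∀ x, ContinuousOn (fun t => T t x) (Ici 0)

def HasGeneratorOn (T : ℝ → X →L[ℝ] X) (A : X → X) (D : Set X) : Prop :=
  ∀ x ∈ D, Tendsto (fun h : ℝ => h⁻¹ • (T h x - x)) (𝓝[>] 0) (𝓝 (A x))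

theorem apply_mem_of_commute {T : ℝ → X →L[ℝ] X} {D : Set X}
    (hD : ∀ x, x ∈ D ↔ ∃ y, Tendsto (fun h : ℝ => h⁻¹ • (T h x - x)) (𝓝[>] 0) (𝓝 y))
    {B : X →L[ℝ] X} (hB : ∀ h > (0 : ℝ), Commute (T h) B) {x : X} (hx : x ∈ D) :
    B x ∈ D := by
  obtain ⟨y, hy⟩ := (hD x).1 hx
  refine (hD (B x)).2 ⟨B y, ((B.continuous.tendsto y).comp hy).congr' ?_⟩
  filter_upwards [self_mem_nhdsWithin] with h hh
  have hBx : T h (B x) = B (T h x) := DFunLike.congr_fun (hB h hh).eq x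
  rw [hBx, Function.comp_apply, map_smul, map_sub]

namespace IsStronglyContinuousSemigroup

variable {T S T₁ T₂ : ℝ → X →L[ℝ] X}

theorem commute (hT : IsStronglyContinuousSemigroup T) {s t : ℝ} (hs : 0 ≤ s) (ht : 0 ≤ t) :
    Commute (T s) (T t) := by
  rw [Commute, SemiconjBy, ← hT.map_add s hs t ht, ← hT.map_add t ht s hs, add_comm]

theorem tendsto_nhdsGT_zero (hT : IsStronglyContinuousSemigroup T) (x : X) :
    Tendsto (fun h => T h x) (𝓝[>] 0) (𝓝 x) := by
  simpa [hT.map_zero] using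
    ((hT.continuousOn_apply x 0 (mem_Ici.2 le_rfl)).mono Ioi_subset_Ici_self).tendsto

theorem list_prod_ofFn (hT : IsStronglyContinuousSemigroup T) {n : ℕ} (c : Fin n → ℝ)
    (hc : ∀ i, 0 ≤ c i) : (List.ofFn fun i => T (c i)).prod = T (∑ i, c i) := by
  induction n with
  | zero => simp [hT.map_zero]
  | succ n ih =>
    rw [List.ofFn_succ, List.prod_cons, ih _ fun i => hc i.succ, Fin.sum_univ_succ,
      hT.map_add _ (hc 0) _ (Finset.sum_nonneg fun i _ => hc i.succ)]

theorem continuousOn_apply_sub_apply (hS : IsStronglyContinuousSemigroup S)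
    (hT : IsStronglyContinuousSemigroup T) {t M : ℝ} (hM : ∀ s ∈ Icc 0 t, ‖T s‖ ≤ M) (x : X) :
    ContinuousOn (fun τ => T (t - τ) (S τ x)) (Icc 0 t) := by
  have hmaps : MapsTo (t - ·) (Icc 0 t) (Ici 0) := fun σ hσ => sub_nonneg.2 hσ.2
  intro τ hτ
  refine tendsto_clm_apply_of_eventually_norm_le (T := fun τ => T (t - τ)) (M := M) ?_
    ((hT.continuousOn_apply _ _ (hmaps hτ)).comp (continuous_sub_left t).continuousWithinAt
      hmaps)
    ((hS.continuousOn_apply x τ hτ.1).mono Icc_subset_Ici_self)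
  filter_upwards [self_mem_nhdsWithin] with σ hσ
  exact hM _ ⟨by linarith [hσ.2], by linarith [hσ.1]⟩

theorem hasDerivWithinAt_apply_sub_apply (hS : IsStronglyContinuousSemigroup S)
    (hT : IsStronglyContinuousSemigroup T) {A : X → X} {D : Set X}
    (hSD : ∀ s ≥ (0 : ℝ), MapsTo (S s) D D) (hSA : HasGeneratorOn S A D)
    (hTA : HasGeneratorOn T A D) {t M : ℝ} (hM : ∀ s ∈ Icc 0 t, ‖T s‖ ≤ M) {x : X}
    (hx : x ∈ D) {s : ℝ} (hs : s ∈ Ico 0 t) :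
    HasDerivWithinAt (fun τ => T (t - τ) (S τ x)) 0 (Ici s) s := by
  set y := S s x
  have hy : y ∈ D := hSD s hs.1 hx
  have hslope : ∀ h ∈ Ioc 0 (t - s), h⁻¹ • (T (t - (s + h)) (S (s + h) x) - T (t - s) y)
      = T (t - s - h) (h⁻¹ • (S h y - y) - h⁻¹ • (T h y - y)) := by
    rintro h ⟨h0, hts⟩
    have hSy : S (s + h) x = S h y := by rw [add_comm, hS.map_add h h0.le s hs.1]; rfl
    have hTy : T (t - s) y = T (t - s - h) (T h y) := by
      have := hT.map_add (t - s - h) (by linarith) h h0.le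
      rw [sub_add_cancel] at this
      rw [this]; rfl
    rw [hSy, hTy, ← sub_sub, ← map_sub, ← map_smul, ← smul_sub]
    congr 2
    abel
  have hlim : Tendsto (fun h => T (t - s - h) (h⁻¹ • (S h y - y) - h⁻¹ • (T h y - y)))
      (𝓝[>] 0) (𝓝 0) := by
    refine tendsto_clm_apply_of_eventually_norm_le (y := 0) (M := M) ?_ (by simp)
      (by simpa using (hSA y hy).sub (hTA y hy))
    filter_upwards [Ioc_mem_nhdsGT (sub_pos.2 hs.2)] with h hh
    exact hM _ ⟨by linarith [hh.2], by linarith [hh.1, hs.1]⟩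
  have hnhds : 𝓝[>] s = map (s + ·) (𝓝[>] 0) := by simp
  rw [← hasDerivWithinAt_Ioi_iff_Ici, hasDerivWithinAt_iff_tendsto_slope' self_notMem_Ioi,
    hnhds, tendsto_map'_iff]
  refine hlim.congr' ?_
  filter_upwards [Ioc_mem_nhdsGT (sub_pos.2 hs.2)] with h hh
  rw [Function.comp_apply, slope_def_module, add_sub_cancel_left, hslope h hh]

theorem exists_norm_le [CompleteSpace X] (hT : IsStronglyContinuousSemigroup T) (t : ℝ) :
    ∃ M, ∀ s ∈ Icc 0 t, ‖T s‖ ≤ M :=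
  exists_norm_le_of_continuousOn_apply isCompact_Icc fun x =>
    (hT.continuousOn_apply x).mono Icc_subset_Ici_self

theorem exists_eventually_norm_le [CompleteSpace X] (hT : IsStronglyContinuousSemigroup T)
    (t : ℝ) : ∃ M, ∀ᶠ s in 𝓝[Ici 0] t, ‖T s‖ ≤ M := by
  obtain ⟨M, hM⟩ := hT.exists_norm_le (t + 1)
  refine ⟨M, mem_of_superset ?_ hM⟩
  rw [← Ici_inter_Iic]
  exact inter_mem_nhdsWithin _ (Iic_mem_nhds (by linarith))

theorem mul [CompleteSpace X] (h₁ : IsStronglyContinuousSemigroup T₁)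
    (h₂ : IsStronglyContinuousSemigroup T₂)
    (hcomm : ∀ s ≥ (0 : ℝ), ∀ t ≥ (0 : ℝ), Commute (T₁ s) (T₂ t)) :
    IsStronglyContinuousSemigroup fun t => T₁ t * T₂ t where
  map_zero := by simp [h₁.map_zero, h₂.map_zero]
  map_add s hs t ht := by
    rw [h₁.map_add s hs t ht, h₂.map_add s hs t ht, (hcomm t ht s hs).mul_mul_mul_comm]
  continuousOn_apply x t ht := by
    obtain ⟨M, hM⟩ := h₁.exists_eventually_norm_le t
    exact tendsto_clm_apply_of_eventually_norm_le (v := fun s => T₂ s x) hM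
      (h₁.continuousOn_apply _ t ht) (h₂.continuousOn_apply x t ht)

theorem mapsTo_mul_inter (h₁ : IsStronglyContinuousSemigroup T₁)
    (h₂ : IsStronglyContinuousSemigroup T₂)
    (hcomm : ∀ s ≥ (0 : ℝ), ∀ t ≥ (0 : ℝ), Commute (T₁ s) (T₂ t)) {D₁ D₂ : Set X}
    (hD₁ : ∀ x, x ∈ D₁ ↔ ∃ y, Tendsto (fun h : ℝ => h⁻¹ • (T₁ h x - x)) (𝓝[>] 0) (𝓝 y))
    (hD₂ : ∀ x, x ∈ D₂ ↔ ∃ y, Tendsto (fun h : ℝ => h⁻¹ • (T₂ h x - x)) (𝓝[>] 0) (𝓝 y))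
    {s : ℝ} (hs : 0 ≤ s) : MapsTo (T₁ s * T₂ s) (D₁ ∩ D₂) (D₁ ∩ D₂) := fun _ hx =>
  ⟨apply_mem_of_commute hD₁
      (fun h hh => (h₁.commute hh.le hs).mul_right (hcomm h hh.le s hs)) hx.1,
    apply_mem_of_commute hD₂
      (fun h hh => (hcomm s hs h hh.le).symm.mul_right (h₂.commute hh.le hs)) hx.2⟩

theorem hasGeneratorOn_mul [CompleteSpace X] (h₁ : IsStronglyContinuousSemigroup T₁)
    {A₁ A₂ : X → X} {D₁ D₂ : Set X} (hA₁ : HasGeneratorOn T₁ A₁ D₁)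
    (hA₂ : HasGeneratorOn T₂ A₂ D₂) :
    HasGeneratorOn (fun t => T₁ t * T₂ t) (fun x => A₁ x + A₂ x) (D₁ ∩ D₂) := by
  rintro x ⟨hx₁, hx₂⟩
  obtain ⟨M, hM⟩ := h₁.exists_eventually_norm_le 0
  have hT₁A₂ : Tendsto (fun h : ℝ => T₁ h (h⁻¹ • (T₂ h x - x))) (𝓝[>] 0) (𝓝 (A₂ x)) :=
    tendsto_clm_apply_of_eventually_norm_le
      (hM.filter_mono (nhdsWithin_mono _ Ioi_subset_Ici_self)) (h₁.tendsto_nhdsGT_zero _)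
      (hA₂ x hx₂)
  refine ((hA₁ x hx₁).add hT₁A₂).congr fun h => ?_
  simp only [map_smul, map_sub, ← smul_add]
  congr 1
  abel

theorem eqOn_of_hasGeneratorOn [CompleteSpace X] (hS : IsStronglyContinuousSemigroup S)
    (hT : IsStronglyContinuousSemigroup T) {A : X → X} {D : Set X}
    (hSD : ∀ s ≥ (0 : ℝ), MapsTo (S s) D D) (hSA : HasGeneratorOn S A D)
    (hTA : HasGeneratorOn T A D) {t : ℝ} (ht : 0 ≤ t) : EqOn (T t) (S t) D := by
  intro x hx
  obtain ⟨M, hM⟩ := hT.exists_norm_le t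
  have hconst := constant_of_has_deriv_right_zero (continuousOn_apply_sub_apply hS hT hM x)
    (fun s hs => hasDerivWithinAt_apply_sub_apply hS hT hSD hSA hTA hM hx hs) t
    (right_mem_Icc.2 ht)
  simpa [hS.map_zero, hT.map_zero] using hconst.symm

end IsStronglyContinuousSemigroup

theorem HasGeneratorOn.dense_of_dense_image_sub {S : ℝ → X →L[ℝ] X} {A : X → X}
    {D : Submodule ℝ X} (hSA : HasGeneratorOn S A D) (hSD : ∀ s ≥ (0 : ℝ), MapsTo (S s) D D)
    {lam : ℝ} (hrange : Dense ((fun x => lam • x - A x) '' (D : Set X))) :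
    Dense (D : Set X) := by
  refine D.dense_of_forall_dual_eq_zero fun f hf => ?_
  have hfA : ∀ x ∈ D, f (A x) = 0 := by
    intro x hx
    refine tendsto_nhds_unique ((f.continuous.tendsto _).comp (hSA x hx))
      (tendsto_const_nhds.congr' ?_)
    filter_upwards [self_mem_nhdsWithin] with h hh
    simp [hf x hx, hf _ (hSD h (le_of_lt hh) hx)]
  have hfim : EqOn f 0 ((fun x => lam • x - A x) '' (D : Set X)) := by
    rintro _ ⟨x, hx, rfl⟩
    simp [hf x hx, hfA x hx]
  exact DFunLike.coe_injective (f.continuous.ext_on hrange continuous_zero hfim)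

theorem IsStronglyContinuousSemigroup.eq_of_hasGeneratorOn [CompleteSpace X]
    {S T : ℝ → X →L[ℝ] X} (hS : IsStronglyContinuousSemigroup S)
    (hT : IsStronglyContinuousSemigroup T) {A : X → X} {D : Submodule ℝ X}
    (hSD : ∀ s ≥ (0 : ℝ), MapsTo (S s) D D) (hSA : HasGeneratorOn S A D)
    (hTA : HasGeneratorOn T A D) {lam : ℝ}
    (hrange : Dense ((fun x => lam • x - A x) '' (D : Set X))) {t : ℝ} (ht : 0 ≤ t) :
    T t = S t :=
  DFunLike.coe_injective <| (T t).continuous.ext_on (hSA.dense_of_dense_image_sub hSD hrange)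
    (S t).continuous (eqOn_of_hasGeneratorOn hS hT hSD hSA hTA ht)

end Semigroups

theorem trotter_nonuniform_product_formula_general
    {X : Type*} [NormedAddCommGroup X] [NormedSpace ℝ X] [CompleteSpace X]
    (T₁ T₂ T₃ : ℝ → X →L[ℝ] X)
    -- `T₁` is a strongly continuous contraction semigroup:
    (hT₁0 : T₁ 0 = 1)
    (hT₁sg : ∀ s ≥ (0 : ℝ), ∀ t ≥ (0 : ℝ), T₁ (s + t) = T₁ s * T₁ t)
    (hT₁cont : ∀ x : X, ContinuousOn (fun t => T₁ t x) (Ici (0 : ℝ)))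
    -- `T₂` is a strongly continuous contraction semigroup:
    (hT₂0 : T₂ 0 = 1)
    (hT₂sg : ∀ s ≥ (0 : ℝ), ∀ t ≥ (0 : ℝ), T₂ (s + t) = T₂ s * T₂ t)
    (hT₂cont : ∀ x : X, ContinuousOn (fun t => T₂ t x) (Ici (0 : ℝ)))
    -- they commute:
    (hcomm : ∀ t ≥ (0 : ℝ), ∀ t' ≥ (0 : ℝ), T₁ t * T₂ t' = T₂ t' * T₁ t)
    -- generators `(A₁, D₁)` and `(A₂, D₂)`:
    (D₁ D₂ : Submodule ℝ X) (A₁ A₂ : X → X)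
    (hA₁ : ∀ x, x ∈ D₁ ↔ ∃ y : X,
      Tendsto (fun h : ℝ => h⁻¹ • (T₁ h x - x)) (𝓝[>] 0) (𝓝 y))
    (hA₁' : ∀ x ∈ D₁, Tendsto (fun h : ℝ => h⁻¹ • (T₁ h x - x)) (𝓝[>] 0) (𝓝 (A₁ x)))
    (hA₂ : ∀ x, x ∈ D₂ ↔ ∃ y : X,
      Tendsto (fun h : ℝ => h⁻¹ • (T₂ h x - x)) (𝓝[>] 0) (𝓝 y))
    (hA₂' : ∀ x ∈ D₂, Tendsto (fun h : ℝ => h⁻¹ • (T₂ h x - x)) (𝓝[>] 0) (𝓝 (A₂ x)))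
    -- `(λ₀ - A₁ - A₂)(D₁ ∩ D₂)` is dense for some `λ₀ > 0`:
    (lam₀ : ℝ)
    (hrange : Dense ((fun x => lam₀ • x - (A₁ x + A₂ x)) ''
      ((D₁ ⊓ D₂ : Submodule ℝ X) : Set X)))
    -- `A₁ + A₂` generates the strongly continuous semigroup `T₃`:
    (hT₃0 : T₃ 0 = 1)
    (hT₃sg : ∀ s ≥ (0 : ℝ), ∀ t ≥ (0 : ℝ), T₃ (s + t) = T₃ s * T₃ t)
    (hT₃cont : ∀ x : X, ContinuousOn (fun t => T₃ t x) (Ici (0 : ℝ)))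
    (hT₃gen : ∀ x ∈ (D₁ ⊓ D₂ : Submodule ℝ X),
      Tendsto (fun h : ℝ => h⁻¹ • (T₃ h x - x)) (𝓝[>] 0) (𝓝 (A₁ x + A₂ x)))
    -- the triangular array:
    (a : ℕ → ℕ → ℝ)
    (hpos : ∀ n ≥ 1, ∀ i ∈ Finset.Icc 1 n, 0 < a n i)
    (hsum : ∀ n ≥ 1, ∑ i ∈ Finset.Icc 1 n, a n i = 1)
    (x : X) (t₀ : ℝ) :
    TendstoUniformlyOn
      (fun (n : ℕ) (t : ℝ) =>
        (List.ofFn fun i : Fin n => T₁ (a n (i.1 + 1) * t) * T₂ (a n (i.1 + 1) * t)).prod x)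
      (fun t => T₃ t x) atTop (Icc 0 t₀) := by
  have h₁ : IsStronglyContinuousSemigroup T₁ := ⟨hT₁0, hT₁sg, hT₁cont⟩
  have h₂ : IsStronglyContinuousSemigroup T₂ := ⟨hT₂0, hT₂sg, hT₂cont⟩
  have h₃ : IsStronglyContinuousSemigroup T₃ := ⟨hT₃0, hT₃sg, hT₃cont⟩
  have hS := h₁.mul h₂ hcomm
  have hT₃S : ∀ t ≥ (0 : ℝ), T₃ t = T₁ t * T₂ t := fun t ht =>
    hS.eq_of_hasGeneratorOn h₃ (fun s hs => h₁.mapsTo_mul_inter h₂ hcomm hA₁ hA₂ hs)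
      (h₁.hasGeneratorOn_mul hA₁' hA₂') hT₃gen hrange ht
  have hprod : ∀ n ≥ 1, ∀ t ≥ (0 : ℝ),
      (List.ofFn fun i : Fin n => T₁ (a n (i.1 + 1) * t) * T₂ (a n (i.1 + 1) * t)).prod
        = T₃ t := by
    intro n hn t ht
    rw [hS.list_prod_ofFn (fun i => a n (i.1 + 1) * t)
        (fun i => mul_nonneg (hpos n hn _ (Finset.mem_Icc.2 ⟨by omega, by omega⟩)).le ht),
      ← Finset.sum_mul, Fin.sum_univ_add_one_eq_sum_Icc (a n), hsum n hn, one_mul, hT₃S t ht]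
  intro u hu
  filter_upwards [eventually_ge_atTop 1] with n hn t ht
  rw [hprod n hn t ht.1]
  exact refl_mem_uniformity hu

/-- Corollary 1 (non-uniform Lie–Trotter product formula).  Let `(T₁ t)` and `(T₂ t)` be
strongly continuous contraction semigroups on a Banach space `X` with generators
`(A₁, D₁)` and `(A₂, D₂)`, commuting with each other.  Assume `A₁ + A₂` on `D₁ ∩ D₂` is
closed (i.e. has closed graph), generates a strongly continuous semigroup `(T₃ t)`, and
`(λ₀ - A₁ - A₂)(D₁ ∩ D₂)` is dense for some `λ₀ > 0`.  If `(a n i)_{i=1}^n` is a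
triangular array of positive reals with row sums `1` and
`lim_n ∑_{i=1}^n |1/n - a n i| = 0`, then for every `x ∈ X`,
`T₃ t x = lim_n ∏_{i=1}^n T₁ (a n i * t) T₂ (a n i * t) x`, uniformly on `[0, t₀]`. -/
theorem trotter_nonuniform_product_formula
    {X : Type*} [NormedAddCommGroup X] [NormedSpace ℝ X] [CompleteSpace X]
    (T₁ T₂ T₃ : ℝ → X →L[ℝ] X)
    -- `T₁` is a strongly continuous contraction semigroup:
    (hT₁0 : T₁ 0 = 1)
    (hT₁sg : ∀ s ≥ (0 : ℝ), ∀ t ≥ (0 : ℝ), T₁ (s + t) = T₁ s * T₁ t)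
    (hT₁cont : ∀ x : X, ContinuousOn (fun t => T₁ t x) (Ici (0 : ℝ)))
    (hT₁contr : ∀ t ≥ (0 : ℝ), ‖T₁ t‖ ≤ 1)
    -- `T₂` is a strongly continuous contraction semigroup:
    (hT₂0 : T₂ 0 = 1)
    (hT₂sg : ∀ s ≥ (0 : ℝ), ∀ t ≥ (0 : ℝ), T₂ (s + t) = T₂ s * T₂ t)
    (hT₂cont : ∀ x : X, ContinuousOn (fun t => T₂ t x) (Ici (0 : ℝ)))
    (hT₂contr : ∀ t ≥ (0 : ℝ), ‖T₂ t‖ ≤ 1)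
    -- they commute:
    (hcomm : ∀ t ≥ (0 : ℝ), ∀ t' ≥ (0 : ℝ), T₁ t * T₂ t' = T₂ t' * T₁ t)
    -- generators `(A₁, D₁)` and `(A₂, D₂)`:
    (D₁ D₂ : Submodule ℝ X) (A₁ A₂ : X → X)
    (hA₁ : ∀ x, x ∈ D₁ ↔ ∃ y : X,
      Tendsto (fun h : ℝ => h⁻¹ • (T₁ h x - x)) (𝓝[>] 0) (𝓝 y))
    (hA₁' : ∀ x ∈ D₁, Tendsto (fun h : ℝ => h⁻¹ • (T₁ h x - x)) (𝓝[>] 0) (𝓝 (A₁ x)))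
    (hA₂ : ∀ x, x ∈ D₂ ↔ ∃ y : X,
      Tendsto (fun h : ℝ => h⁻¹ • (T₂ h x - x)) (𝓝[>] 0) (𝓝 y))
    (hA₂' : ∀ x ∈ D₂, Tendsto (fun h : ℝ => h⁻¹ • (T₂ h x - x)) (𝓝[>] 0) (𝓝 (A₂ x)))
    -- `A₁ + A₂` with domain `D₁ ∩ D₂` is closed:
    (hclosed : IsClosed {p : X × X | p.1 ∈ (D₁ ⊓ D₂ : Submodule ℝ X) ∧
      p.2 = A₁ p.1 + A₂ p.1})
    -- `(λ₀ - A₁ - A₂)(D₁ ∩ D₂)` is dense for some `λ₀ > 0`: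
    (lam₀ : ℝ) (hlam₀ : 0 < lam₀)
    (hrange : Dense ((fun x => lam₀ • x - (A₁ x + A₂ x)) ''
      ((D₁ ⊓ D₂ : Submodule ℝ X) : Set X)))
    -- `A₁ + A₂` generates the strongly continuous semigroup `T₃`:
    (hT₃0 : T₃ 0 = 1)
    (hT₃sg : ∀ s ≥ (0 : ℝ), ∀ t ≥ (0 : ℝ), T₃ (s + t) = T₃ s * T₃ t)
    (hT₃cont : ∀ x : X, ContinuousOn (fun t => T₃ t x) (Ici (0 : ℝ)))
    (hT₃gen : ∀ x ∈ (D₁ ⊓ D₂ : Submodule ℝ X),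
      Tendsto (fun h : ℝ => h⁻¹ • (T₃ h x - x)) (𝓝[>] 0) (𝓝 (A₁ x + A₂ x)))
    -- the triangular array:
    (a : ℕ → ℕ → ℝ)
    (hpos : ∀ n ≥ 1, ∀ i ∈ Finset.Icc 1 n, 0 < a n i)
    (hsum : ∀ n ≥ 1, ∑ i ∈ Finset.Icc 1 n, a n i = 1)
    (hdev : Tendsto (fun n : ℕ => ∑ i ∈ Finset.Icc 1 n, |1 / (n : ℝ) - a n i|)
      atTop (𝓝 0))
    (x : X) (t₀ : ℝ) (ht₀ : 0 < t₀) :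
    TendstoUniformlyOn
      (fun (n : ℕ) (t : ℝ) =>
        (List.ofFn fun i : Fin n => T₁ (a n (i.1 + 1) * t) * T₂ (a n (i.1 + 1) * t)).prod x)
      (fun t => T₃ t x) atTop (Icc 0 t₀) :=
  trotter_nonuniform_product_formula_general T₁ T₂ T₃ hT₁0 hT₁sg hT₁cont hT₂0 hT₂sg hT₂cont hcomm D₁
    D₂ A₁ A₂ hA₁ hA₁' hA₂ hA₂' lam₀ hrange hT₃0 hT₃sg hT₃cont hT₃gen a hpos hsum x t₀
end

section
/- Let ξ be a real random variable with mean 0 and variance 1 whose law has a density p_ξ ∈ C₀(ℝ), and for t > 0 define (V_ξ(t)f)(x) = ∫_ℝ f(x − √t·y) p_ξ(y) dy on C₀(ℝ), with V_ξ(0) = I. Then for every f ∈ C₀(ℝ) that is twice differentiable with f' and f'' in C₀(ℝ), the limit lim_{h→0⁺} (V_ξ(h)f − f)/h exists in the supremum norm and equals (1/2) f''. -/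
/-! With `R x u = f (x + u) - f x - u f' x - u² f'' x / 2` the second-order Taylor remainder,
the moment conditions `∫ p = 1`, `∫ y p = 0`, `∫ y² p = 1` give
`(V h f - f) x - h f'' x / 2 = ∫ R x (-√h y) p y dy`.
Two mean-value estimates bound `|R x u|` by `ε u²` for `|u| ≤ δ` (uniform continuity of `f''`)
and by `2 ‖f''‖ u²` everywhere, so the error of the difference quotient is at most
`ε + 2 ‖f''‖ ∫_{√h |y| > δ} y² p y dy`, uniformly in `x`; the tail integral tends to `0`
with `h` by dominated convergence. -/

open Filter Topology MeasureTheory ZeroAtInfty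

/-- The measurement operator of Example 2: for a density `p`,
`(V t f) x = ∫ f (x - √t·y) p y dy` for `t ≠ 0`, and `V 0 f = f`. -/
noncomputable def convOp (p : ℝ → ℝ) (t : ℝ) (f : ℝ → ℝ) : ℝ → ℝ :=
  fun x => if t = 0 then f x else ∫ y : ℝ, f (x - Real.sqrt t * y) * p y

open Metric Set

noncomputable def taylorRem (f f' f'' : ℝ → ℝ) (x u : ℝ) : ℝ :=
  f (x + u) - f x - u * f' x - u ^ 2 / 2 * f'' x

theorem abs_le_mul_abs_of_hasDerivAt {φ φ' : ℝ → ℝ} (hφ : ∀ v, HasDerivAt φ (φ' v) v)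
    (h0 : φ 0 = 0) {u K : ℝ} (hK : ∀ v, |v| ≤ |u| → |φ' v| ≤ K) :
    |φ u| ≤ K * |u| := by
  simpa [h0] using Convex.norm_image_sub_le_of_norm_hasDerivWithin_le
    (fun v _ => (hφ v).hasDerivWithinAt) (fun v hv => hK v (by simpa using hv))
    (convex_closedBall 0 |u|) (mem_closedBall_self (abs_nonneg u))
    (by simp : u ∈ closedBall 0 |u|)

theorem abs_taylorRem_le {f f' f'' : ℝ → ℝ} (hf' : ∀ x, HasDerivAt f (f' x) x)
    (hf'' : ∀ x, HasDerivAt f' (f'' x) x) {x u C : ℝ}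
    (hC : ∀ v, |v| ≤ |u| → |f'' (x + v) - f'' x| ≤ C) :
    |taylorRem f f' f'' x u| ≤ C * u ^ 2 := by
  have hC0 : 0 ≤ C := (abs_nonneg _).trans (hC 0 (by simp))
  have hderiv₁ : ∀ v, HasDerivAt (fun v => f' (x + v) - f' x - v * f'' x)
      (f'' (x + v) - f'' x) v := fun v =>
    (((hf'' (x + v)).comp_const_add x v).sub_const (f' x)).fun_sub (hasDerivAt_mul_const _)
  have hderiv₀ : ∀ v, HasDerivAt (taylorRem f f' f'' x)
      (f' (x + v) - f' x - v * f'' x) v := fun v =>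
    ((((hf' (x + v)).comp_const_add x v).sub_const (f x)).fun_sub
      (hasDerivAt_mul_const _)).fun_sub
      (((hasDerivAt_pow 2 v).div_const 2).mul_const (f'' x)) |>.congr_deriv (by ring)
  have hfirst : ∀ v, |v| ≤ |u| → |f' (x + v) - f' x - v * f'' x| ≤ C * |u| := fun v hv =>
    (abs_le_mul_abs_of_hasDerivAt hderiv₁ (by simp) fun w hw => hC w (hw.trans hv)).trans
      (mul_le_mul_of_nonneg_left hv hC0)
  calc |taylorRem f f' f'' x u| ≤ C * |u| * |u| :=
        abs_le_mul_abs_of_hasDerivAt hderiv₀ (by simp [taylorRem]) hfirst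
    _ = C * u ^ 2 := by rw [mul_assoc, abs_mul_abs_self, sq]

theorem exists_abs_taylorRem_le_of_uniformContinuous {f f' f'' : ℝ → ℝ}
    (hf' : ∀ x, HasDerivAt f (f' x) x) (hf'' : ∀ x, HasDerivAt f' (f'' x) x)
    (huc : UniformContinuous f'') {ε : ℝ} (hε : 0 < ε) :
    ∃ δ > 0, ∀ x u, |u| ≤ δ → |taylorRem f f' f'' x u| ≤ ε * u ^ 2 := by
  obtain ⟨δ, hδ, hclose⟩ := Metric.uniformContinuous_iff_le.1 huc ε hε
  refine ⟨δ, hδ, fun x u hu => abs_taylorRem_le hf' hf'' fun v hv => ?_⟩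
  simpa [Real.dist_eq] using
    hclose (a := x + v) (b := x) (by simpa [Real.dist_eq] using hv.trans hu)

theorem tendsto_setIntegral_lt_abs_mul_nhds_zero {E : Type*} [NormedAddCommGroup E]
    [NormedSpace ℝ E] {μ : Measure ℝ} {w : ℝ → E} (hw : Integrable w μ) {δ : ℝ}
    (hδ : 0 < δ) :
    Tendsto (fun c => ∫ y in {y | δ < |c * y|}, w y ∂μ) (𝓝 0) (𝓝 0) := by
  have hS : ∀ c : ℝ, MeasurableSet {y : ℝ | δ < |c * y|} := fun c =>
    measurableSet_lt measurable_const (measurable_const.mul measurable_id).abs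
  have hlim : ∀ y, Tendsto (fun c => {y | δ < |c * y|}.indicator w y) (𝓝 0) (𝓝 0) := by
    intro y
    have hsmall : ∀ᶠ c : ℝ in 𝓝 0, |c * y| < δ :=
      ((continuous_id.mul continuous_const).abs.tendsto' 0 0 (by simp)).eventually
        (eventually_lt_nhds hδ)
    refine tendsto_const_nhds.congr' (hsmall.mono fun c hc => ?_)
    exact (indicator_of_notMem (show y ∉ {y | δ < |c * y|} from not_lt.2 hc.le) w).symm
  have hind : (fun c => ∫ y in {y | δ < |c * y|}, w y ∂μ) =
      fun c => ∫ y, {y | δ < |c * y|}.indicator w y ∂μ :=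
    funext fun c => (integral_indicator (hS c)).symm
  rw [hind]
  simpa only [integral_zero] using
    tendsto_integral_filter_of_dominated_convergence (f := fun _ => 0) (fun y => ‖w y‖)
      (Eventually.of_forall fun c => (hw.indicator (hS c)).aestronglyMeasurable)
      (Eventually.of_forall fun c => ae_of_all _ fun y => norm_indicator_le_norm_self w y)
      hw.norm (ae_of_all _ hlim)

theorem convOp_sub_eq_integral_taylorRem {p : ℝ → ℝ} (hp : Integrable p)
    (hp1 : ∫ y, p y = 1) (hm1Int : Integrable fun y => y * p y) (hm1 : ∫ y, y * p y = 0)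
    (hm2Int : Integrable fun y => y ^ 2 * p y) (hm2 : ∫ y, y ^ 2 * p y = 1)
    {f : ℝ → ℝ} (hf : Continuous f) {C : ℝ} (hfC : ∀ y, ‖f y‖ ≤ C) (f' f'' : ℝ → ℝ)
    {h : ℝ} (hh : 0 < h) (x : ℝ) :
    convOp p h f x - f x - h / 2 * f'' x =
      ∫ y, taylorRem f f' f'' x (-(√h * y)) * p y := by
  have hI : Integrable fun y => f (x - √h * y) * p y :=
    hp.bdd_mul (by fun_prop) (ae_of_all _ fun y => hfC _)
  have hexpand : (fun y => taylorRem f f' f'' x (-(√h * y)) * p y) = fun y =>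
      (f (x - √h * y) * p y - f x * p y + (√h * f' x) * (y * p y))
        - (√h ^ 2 / 2 * f'' x) * (y ^ 2 * p y) := by
    ext y
    rw [taylorRem, ← sub_eq_add_neg]
    ring
  rw [hexpand, integral_sub ((hI.sub' (hp.const_mul _)).fun_add (hm1Int.const_mul _))
      (hm2Int.const_mul _), integral_add (hI.sub' (hp.const_mul _)) (hm1Int.const_mul _),
    integral_sub hI (hp.const_mul _), integral_const_mul, integral_const_mul,
    integral_const_mul, hp1, hm1, hm2, Real.sq_sqrt hh.le, convOp, if_neg hh.ne']
  ring

theorem abs_integral_comp_mul_le {μ : Measure ℝ} {r p : ℝ → ℝ} {ε M δ c : ℝ}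
    (hp0 : ∀ y, 0 ≤ p y) (hm2Int : Integrable (fun y => y ^ 2 * p y) μ)
    (hε : 0 ≤ ε) (hsmall : ∀ u, |u| ≤ δ → |r u| ≤ ε * u ^ 2) (hbig : ∀ u, |r u| ≤ M * u ^ 2) :
    |∫ y, r (c * y) * p y ∂μ| ≤
      c ^ 2 * (ε * ∫ y, y ^ 2 * p y ∂μ + M * ∫ y in {y | δ < |c * y|}, y ^ 2 * p y ∂μ) := by
  set S := {y : ℝ | δ < |c * y|}
  have hS : MeasurableSet S :=
    measurableSet_lt measurable_const (measurable_const.mul measurable_id).abs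
  have hpt : ∀ y, ‖r (c * y) * p y‖ ≤
      c ^ 2 * (ε * (y ^ 2 * p y) + M * S.indicator (fun y => y ^ 2 * p y) y) := by
    intro y
    have hw : 0 ≤ y ^ 2 * p y := mul_nonneg (sq_nonneg y) (hp0 y)
    rw [Real.norm_eq_abs, abs_mul, abs_of_nonneg (hp0 y)]
    by_cases hy : y ∈ S
    · rw [indicator_of_mem hy]
      calc |r (c * y)| * p y ≤ M * (c * y) ^ 2 * p y :=
            mul_le_mul_of_nonneg_right (hbig _) (hp0 y)
        _ ≤ _ := by nlinarith [sq_nonneg c, mul_nonneg hε hw]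
    · rw [indicator_of_notMem hy]
      calc |r (c * y)| * p y ≤ ε * (c * y) ^ 2 * p y :=
            mul_le_mul_of_nonneg_right (hsmall _ (not_lt.1 hy)) (hp0 y)
        _ = _ := by ring
  calc |∫ y, r (c * y) * p y ∂μ|
      ≤ ∫ y, c ^ 2 * (ε * (y ^ 2 * p y) + M * S.indicator (fun y => y ^ 2 * p y) y) ∂μ :=
        norm_integral_le_of_norm_le
          (((hm2Int.const_mul ε).add ((hm2Int.indicator hS).const_mul M)).const_mul _)
          (ae_of_all _ hpt)
    _ = _ := by
        rw [integral_const_mul, integral_add (hm2Int.const_mul ε)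
          ((hm2Int.indicator hS).const_mul M), integral_const_mul, integral_const_mul,
          integral_indicator hS]

/-- Let `ξ` be a real random variable with mean `0`, variance `1`, whose law has
density `p ∈ C₀(ℝ)`.  Then for every `f ∈ C₀(ℝ)` which is twice differentiable with
`f', f'' ∈ C₀(ℝ)`, the limit `lim_{h→0⁺} (V_ξ(h) f - f)/h` exists in the supremum norm
(i.e. uniformly on `ℝ`) and equals `(1/2) f''`. -/
theorem convOp_generator_eq_half_secondDeriv
    (p : C₀(ℝ, ℝ)) (hp0 : ∀ y, 0 ≤ p y) (hpInt : Integrable ⇑p)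
    (hp1 : ∫ y : ℝ, p y = 1)
    (hm1Int : Integrable (fun y : ℝ => y * p y)) (hm1 : ∫ y : ℝ, y * p y = 0)
    (hm2Int : Integrable (fun y : ℝ => y ^ 2 * p y)) (hm2 : ∫ y : ℝ, y ^ 2 * p y = 1)
    (f f' f'' : C₀(ℝ, ℝ))
    (hf' : ∀ x, HasDerivAt ⇑f (f' x) x) (hf'' : ∀ x, HasDerivAt ⇑f' (f'' x) x) :
    TendstoUniformly (fun (h : ℝ) (x : ℝ) => h⁻¹ * (convOp ⇑p h ⇑f x - f x))
      (fun x => (1 / 2) * f'' x) (𝓝[>] 0) := by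
  rw [Metric.tendstoUniformly_iff]
  intro ε hε
  set M := 2 * ‖f''‖
  obtain ⟨δ, hδ, hsmall⟩ := exists_abs_taylorRem_le_of_uniformContinuous hf' hf''
    (ZeroAtInftyContinuousMap.uniformContinuous f'') (half_pos hε)
  have hbig : ∀ x u, |taylorRem f f' f'' x u| ≤ M * u ^ 2 := fun x u =>
    abs_taylorRem_le hf' hf'' fun v _ => by
      simpa [Real.dist_eq] using f''.toBCF.dist_le_two_norm (x + v) x
  have htail :
      Tendsto (fun h => M * ∫ y in {y | δ < |√h * y|}, y ^ 2 * p y) (𝓝[>] 0) (𝓝 0) := by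
    simpa using ((tendsto_setIntegral_lt_abs_mul_nhds_zero hm2Int hδ).comp
      ((Real.continuous_sqrt.tendsto' 0 0 Real.sqrt_zero).mono_left
        nhdsWithin_le_nhds)).const_mul M
  filter_upwards [self_mem_nhdsWithin, htail.eventually (eventually_lt_nhds (half_pos hε))]
    with h (hh : 0 < h) htail_h x
  have hbound := abs_integral_comp_mul_le (c := √h) (r := fun u => taylorRem f f' f'' x (-u))
    hp0 hm2Int (half_pos hε).le (fun u hu => by simpa using hsmall x (-u) (by simpa using hu))
    (fun u => by simpa using hbig x (-u))
  rw [← convOp_sub_eq_integral_taylorRem (f := f) hpInt hp1 hm1Int hm1 hm2Int hm2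
    f.continuous f.toBCF.norm_coe_le_norm f' f'' hh x, hm2, Real.sq_sqrt hh.le] at hbound
  calc dist (1 / 2 * f'' x) (h⁻¹ * (convOp p h f x - f x))
      = |h⁻¹ * (convOp p h f x - f x - h / 2 * f'' x)| := by
        rw [dist_comm, Real.dist_eq]
        congr 1
        field_simp
    _ = h⁻¹ * |convOp p h f x - f x - h / 2 * f'' x| := by
        rw [abs_mul, abs_of_pos (inv_pos.2 hh)]
    _ ≤ h⁻¹ * (h * (ε / 2 * 1 + M * ∫ y in {y | δ < |√h * y|}, y ^ 2 * p y)) := by gcongr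
    _ < ε := by
        rw [inv_mul_cancel_left₀ hh.ne']
        linarith
end
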